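/- Let A be a k-algebra that is a domain, and suppose A is left integral over u_good(A), i.e., for every f ∈ A there exist n ≥ 0 and elements d_0, …, d_n ∈ u_good(A), not all zero, such that Σ_{s=0}^{n} d_s f^s = 0. Then u_good(A) = A; equivalently, the only good ℕ-filtration of A is the trivial one with F_0 = A. (Proposition 1.3.) -/

import Mathlib

open scoped TensorProduct ENNReal

universe u v

variable (k : Type v) [Field k]

/-- An ℕ-filtration of a `k`-algebra `A`: an ascending chain of `k`-subspaces
`F 0 ⊆ F 1 ⊆ ⋯` with `k·1 ⊆ F 0`, `⋃ᵢ F i = A` and `F i * F j ⊆ F (i + j)`. -/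
structure AlgFiltration (A : Type u) [Ring A] [Algebra k A] where
  F : ℕ → Submodule k A
  one_mem : (1 : A) ∈ F 0
  mono : ∀ i, F i ≤ F (i + 1)
  exhaustive : ∀ a : A, ∃ i, a ∈ F i
  mul_mem : ∀ i j : ℕ, ∀ x ∈ F i, ∀ y ∈ F j, x * y ∈ F (i + j)

namespace AlgFiltration

variable {k} {A : Type u} [Ring A] [Algebra k A] (𝓕 : AlgFiltration k A)

/-- The Rees algebra `⊕ᵢ (F i) Xⁱ ⊆ A[X]` of a filtration. -/
def rees : Subalgebra k (Polynomial A) where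
  carrier := {p | ∀ i, p.coeff i ∈ 𝓕.F i}
  add_mem' := fun hp hq i => by
    simpa using (𝓕.F i).add_mem (hp i) (hq i)
  mul_mem' := fun {p q} hp hq i => by
    show (p * q).coeff i ∈ 𝓕.F i
    rw [Polynomial.coeff_mul]
    refine Submodule.sum_mem _ fun x hx => ?_
    have h := 𝓕.mul_mem x.1 x.2 _ (hp x.1) _ (hq x.2)
    rwa [show x.1 + x.2 = i by simpa using hx] at h
  algebraMap_mem' := fun c i => by
    rcases i with _ | i
    · simpa [Polynomial.algebraMap_apply, Algebra.algebraMap_eq_smul_one] using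
        (𝓕.F 0).smul_mem c 𝓕.one_mem
    · simp [Polynomial.algebraMap_apply]

/-- The element `X` of the Rees algebra. -/
noncomputable def xElem : 𝓕.rees :=
  ⟨Polynomial.X, fun i => by
    rcases i with _ | _ | i
    · simp
    · simpa [Polynomial.coeff_X] using 𝓕.mono 0 𝓕.one_mem
    · simp [Polynomial.coeff_X]⟩

/-- The associated graded algebra `gr_F(A) = ⊕ᵢ F i / F (i-1)` of a filtration, realized as
the Rees algebra modulo the two-sided ideal generated by the central element `X`. -/
def gr : Type u := RingQuot (fun a b : 𝓕.rees => a = 𝓕.xElem ∧ b = 0)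

noncomputable instance : Ring 𝓕.gr :=
  inferInstanceAs (Ring (RingQuot (fun a b : 𝓕.rees => a = 𝓕.xElem ∧ b = 0)))

noncomputable instance : Algebra k 𝓕.gr :=
  inferInstanceAs (Algebra k (RingQuot (fun a b : 𝓕.rees => a = 𝓕.xElem ∧ b = 0)))

/-- The `k`-linear map sending `a ∈ F i` to the monomial `a Xⁱ` in the Rees algebra. -/
noncomputable def monoMap (i : ℕ) : 𝓕.F i →ₗ[k] 𝓕.rees where
  toFun a :=
    ⟨Polynomial.monomial i (a : A), fun j => by
      rcases eq_or_ne j i with rfl | h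
      · simp only [Polynomial.coeff_monomial, if_pos rfl]
        exact a.2
      · simp [Polynomial.coeff_monomial, h, Ne.symm h]⟩
  map_add' a b := by
    ext
    simp
  map_smul' c a := by
    ext
    simp

/-- The canonical projection from the Rees algebra onto the associated graded algebra. -/
noncomputable def grProj : 𝓕.rees →ₐ[k] 𝓕.gr :=
  RingQuot.mkAlgHom k (fun a b : 𝓕.rees => a = 𝓕.xElem ∧ b = 0)

/-- The degree-`i` homogeneous component `F i / F (i-1)` of the associated graded algebra,
realized as the image of `(F i) Xⁱ` under the projection. -/
noncomputable def grPiece (i : ℕ) : Submodule k 𝓕.gr :=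
  LinearMap.range (𝓕.grProj.toLinearMap ∘ₗ 𝓕.monoMap i)

end AlgFiltration

/-- A `k`-algebra `A` is a firm domain if `A ⊗[k] B` is a domain for every `k`-algebra `B`
which is a domain. -/
def IsFirmDomain (A : Type u) [Ring A] [Algebra k A] : Prop :=
  ∀ (B : Type u) [Ring B] [Algebra k B], IsDomain B → IsDomain (A ⊗[k] B)

/-- A filtration is good if its associated graded algebra is a domain.
`uGood k A` is the subspace of universally degree-`0` elements with respect to good
ℕ-filtrations: the intersection of `F 0` over all good ℕ-filtrations of `A`. -/
noncomputable def uGood (A : Type u) [Ring A] [Algebra k A] : Submodule k A :=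
  ⨅ (𝓕 : AlgFiltration k A) (_ : IsDomain 𝓕.gr), 𝓕.F 0

/-- A filtration is firm if its associated graded algebra is a firm domain.
`uFirm k A` is the intersection of `F 0` over all firm ℕ-filtrations of `A`. -/
noncomputable def uFirm (A : Type u) [Ring A] [Algebra k A] : Submodule k A :=
  ⨅ (𝓕 : AlgFiltration k A) (_ : IsFirmDomain k 𝓕.gr), 𝓕.F 0

/-- The Gelfand–Kirillov dimension of a `k`-algebra `A`: the supremum, over all
finite-dimensional subspaces `V ⊆ A` containing `1`, of `limsup_n log(dim Vⁿ)/log n`. -/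
noncomputable def GKdim (A : Type u) [Ring A] [Algebra k A] : ℝ≥0∞ :=
  ⨆ (V : Submodule k A) (_ : (1 : A) ∈ V) (_ : FiniteDimensional k V),
    Filter.limsup
      (fun n : ℕ => ENNReal.ofReal (Real.log (Module.finrank k ↥(V ^ n)) / Real.log n))
      Filter.atTop

/-- `R` is GKdim-additive if it has finite GK-dimension and
`GKdim (A ⊗ R) = GKdim A + GKdim R` for every `k`-algebra `A`. -/
def IsGKAdditive (R : Type u) [Ring R] [Algebra k R] : Prop :=
  GKdim k R < ⊤ ∧
    ∀ (A : Type u) [Ring A] [Algebra k A], GKdim k (A ⊗[k] R) = GKdim k A + GKdim k R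

/-- Membership in the family `𝓡₁` of GKdim-additive firm domains `R` with `u_firm(R) = k·1`. -/
def InR1 (R : Type u) [Ring R] [Algebra k R] : Prop :=
  IsGKAdditive k R ∧ IsFirmDomain k R ∧ uFirm k R = 1

/-- Membership in the family `𝓡₂` of GKdim-additive domains `R` with `u_good(R) = k·1`. -/
def InR2 (R : Type u) [Ring R] [Algebra k R] : Prop :=
  IsGKAdditive k R ∧ IsDomain R ∧ uGood k R = 1

/-- The canonical image of `P ⊗ Q` in `M ⊗[k] N`, for subspaces `P ⊆ M` and `Q ⊆ N`. -/
def tensorSub {M N : Type u} [Ring M] [Ring N] [Algebra k M] [Algebra k N]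
    (P : Submodule k M) (Q : Submodule k N) : Submodule k (M ⊗[k] N) :=
  Submodule.span k {z | ∃ x ∈ P, ∃ y ∈ Q, z = x ⊗ₜ[k] y}

/-!
Let `F` be a good filtration and suppose some `f` lies outside `F 0`; say `f ∈ F m \ F (m - 1)`
with `m ≥ 1`. In an integrality relation `∑ d_s f^s = 0` the coefficients lie in
`u_good(A) ⊆ F 0`; if `d_N` is the last nonzero one, then `d_N f^N ∈ F (N m - 1)`, so the symbol
of `d_N f^N` in degree `N m` vanishes. But that symbol is `σ(d_N) σ(f)^N`, a product of nonzero
elements of the domain `gr_F(A)`.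
-/

theorem Polynomial.coeff_sum_fin_monomial {R : Type*} [Semiring R] {n : ℕ} (d : Fin n → R)
    (i : ℕ) :
    (∑ t : Fin n, monomial (t : ℕ) (d t)).coeff i = if h : i < n then d ⟨i, h⟩ else 0 := by
  simp only [finsetSum_coeff, coeff_monomial]
  split_ifs with h
  · rw [Finset.sum_eq_single ⟨i, h⟩ (fun t _ ht => if_neg fun hti => ht (Fin.ext hti)) (by simp)]
    simp
  · exact Finset.sum_eq_zero fun t _ => if_neg fun (hti : (t : ℕ) = i) => h (hti ▸ t.2)

namespace AlgFiltration

variable {k} {A : Type u} [Ring A] [Algebra k A] (𝓕 : AlgFiltration k A)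

/-- `Fprev i` is `F (i - 1)`, with the convention `F (-1) = 0`. -/
def Fprev : ℕ → Submodule k A
  | 0 => ⊥
  | i + 1 => 𝓕.F i

theorem F_mono : Monotone 𝓕.F :=
  monotone_nat_of_le_succ 𝓕.mono

theorem F_le_Fprev {i j : ℕ} (h : i < j) : 𝓕.F i ≤ 𝓕.Fprev j := by
  obtain ⟨j, rfl⟩ := Nat.exists_eq_add_of_lt h
  exact 𝓕.F_mono (by omega)

theorem pow_mem_F {f : A} {m : ℕ} (hf : f ∈ 𝓕.F m) (s : ℕ) : f ^ s ∈ 𝓕.F (s * m) := by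
  induction s with
  | zero => simpa using 𝓕.one_mem
  | succ s ih => simpa [pow_succ, Nat.succ_mul] using 𝓕.mul_mem _ _ _ ih _ hf

theorem exists_mem_F_notMem_Fprev {a : A} (ha : a ≠ 0) : ∃ i, a ∈ 𝓕.F i ∧ a ∉ 𝓕.Fprev i := by
  classical
  refine ⟨Nat.find (𝓕.exhaustive a), Nat.find_spec (𝓕.exhaustive a), ?_⟩
  rcases h : Nat.find (𝓕.exhaustive a) with _ | i
  · simpa [Fprev] using ha
  · exact Nat.find_min (𝓕.exhaustive a) (by omega)

theorem commute_xElem (p : 𝓕.rees) : Commute 𝓕.xElem p :=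
  Subtype.ext (Polynomial.commute_X (p : Polynomial A))

noncomputable def xMultiples : TwoSidedIdeal 𝓕.rees :=
  TwoSidedIdeal.mk' (Set.range fun q : 𝓕.rees => 𝓕.xElem * q) ⟨0, mul_zero _⟩
    (fun ⟨p, hp⟩ ⟨q, hq⟩ => ⟨p + q, (mul_add _ _ _).trans (congrArg₂ _ hp hq)⟩)
    (fun ⟨p, hp⟩ => ⟨-p, Subtype.ext (by beta_reduce at hp; simp [← hp])⟩)
    (fun {x _} ⟨q, hq⟩ => ⟨x * q, by
      beta_reduce at hq ⊢; rw [← hq, ← mul_assoc, ← mul_assoc, (𝓕.commute_xElem x).eq]⟩)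
    (fun {_ y} ⟨q, hq⟩ => ⟨q * y, (mul_assoc _ _ _).symm.trans (congrArg (· * y) hq)⟩)

theorem grProj_xElem : 𝓕.grProj 𝓕.xElem = 0 :=
  (RingQuot.mkAlgHom_rel k ⟨rfl, rfl⟩).trans (map_zero _)

theorem grProj_eq_zero_iff (p : 𝓕.rees) : 𝓕.grProj p = 0 ↔ ∃ q, 𝓕.xElem * q = p := by
  refine ⟨fun hp => ?_, fun ⟨q, hq⟩ => by rw [← hq, map_mul, grProj_xElem, zero_mul]⟩
  let c := 𝓕.xMultiples.ringCon
  have hc : ∀ x, c x 0 ↔ ∃ q, 𝓕.xElem * q = x := fun x => by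
    rw [show c x 0 ↔ x - 0 ∈ Set.range fun q => 𝓕.xElem * q from Iff.rfl, sub_zero,
      Set.mem_range]
  let toQuotient : RingQuot (fun a b : 𝓕.rees => a = 𝓕.xElem ∧ b = 0) →ₐ[k] c.Quotient :=
    RingQuot.liftAlgHom k ⟨RingCon.mkₐ k c, fun x y ⟨hx, hy⟩ => by
      rw [hx, hy, RingCon.mkₐ_apply, RingCon.mkₐ_apply, RingCon.eq, hc]; exact ⟨1, mul_one _⟩⟩
  have h : toQuotient (RingQuot.mkAlgHom k _ p) = toQuotient 0 := congrArg toQuotient hp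
  rw [map_zero, RingQuot.liftAlgHom_mkAlgHom_apply, ← map_zero (RingCon.mkₐ k c),
    RingCon.mkₐ_apply, RingCon.mkₐ_apply, RingCon.eq, hc] at h
  exact h

theorem xElem_mul_monoMap {i : ℕ} (a : 𝓕.F i) :
    𝓕.xElem * 𝓕.monoMap i a = 𝓕.monoMap (i + 1) ⟨a, 𝓕.mono i a.2⟩ :=
  Subtype.ext (Polynomial.X_mul_monomial i (a : A))

theorem grProj_monoMap_eq_zero_iff {i : ℕ} (a : 𝓕.F i) :
    𝓕.grProj (𝓕.monoMap i a) = 0 ↔ (a : A) ∈ 𝓕.Fprev i := by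
  rw [grProj_eq_zero_iff]
  constructor
  · rintro ⟨q, hq⟩
    have hcoeff := congrArg (fun p : 𝓕.rees => (p : Polynomial A).coeff i) hq
    simp only [Subalgebra.coe_mul, monoMap, LinearMap.coe_mk, AddHom.coe_mk,
      Polynomial.coeff_monomial_same] at hcoeff
    rcases i with _ | i
    · simp [Fprev, ← hcoeff, xElem]
    · simpa [Fprev, ← hcoeff, xElem, Polynomial.coeff_X_mul] using q.2 i
  · intro ha
    rcases i with _ | i
    · obtain rfl : a = 0 := Subtype.ext ((Submodule.mem_bot k).1 ha)
      exact ⟨0, by rw [mul_zero, map_zero]⟩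
    · exact ⟨𝓕.monoMap i ⟨a, ha⟩, 𝓕.xElem_mul_monoMap _⟩

theorem grProj_monoMap_mul {i j : ℕ} (a : 𝓕.F i) (b : 𝓕.F j) :
    𝓕.grProj (𝓕.monoMap i a) * 𝓕.grProj (𝓕.monoMap j b) =
      𝓕.grProj (𝓕.monoMap (i + j) ⟨a * b, 𝓕.mul_mem i j a a.2 b b.2⟩) := by
  rw [← map_mul]
  exact congrArg 𝓕.grProj (Subtype.ext (Polynomial.monomial_mul_monomial i j (a : A) b))

theorem mul_notMem_Fprev [IsDomain 𝓕.gr] {i j : ℕ} {a b : A} (ha : a ∈ 𝓕.F i)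
    (ha' : a ∉ 𝓕.Fprev i) (hb : b ∈ 𝓕.F j) (hb' : b ∉ 𝓕.Fprev j) :
    a * b ∉ 𝓕.Fprev (i + j) := by
  rw [← 𝓕.grProj_monoMap_eq_zero_iff ⟨a, ha⟩] at ha'
  rw [← 𝓕.grProj_monoMap_eq_zero_iff ⟨b, hb⟩] at hb'
  rw [← 𝓕.grProj_monoMap_eq_zero_iff ⟨a * b, 𝓕.mul_mem i j a ha b hb⟩,
    ← 𝓕.grProj_monoMap_mul ⟨a, ha⟩ ⟨b, hb⟩]
  exact mul_ne_zero ha' hb'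

theorem pow_notMem_Fprev [IsDomain 𝓕.gr] {f : A} {m : ℕ} (hf : f ∈ 𝓕.F m)
    (hf' : f ∉ 𝓕.Fprev m) (s : ℕ) : f ^ s ∉ 𝓕.Fprev (s * m) := by
  induction s with
  | zero =>
    have : Nontrivial A := ⟨⟨f, 0, fun h => hf' (h ▸ zero_mem _)⟩⟩
    simp [Fprev]
  | succ s ih =>
    rw [pow_succ, Nat.succ_mul]
    exact 𝓕.mul_notMem_Fprev (𝓕.pow_mem_F hf s) ih hf hf'

theorem eq_zero_of_eval_eq_zero [IsDomain 𝓕.gr] {f : A} {m : ℕ} (hm : 0 < m)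
    (hf : f ∈ 𝓕.F m) (hf' : f ∉ 𝓕.Fprev m) {p : Polynomial A} (hp : ∀ i, p.coeff i ∈ 𝓕.F 0)
    (hpf : p.eval f = 0) : p = 0 := by
  by_contra hp0
  set N := p.natDegree
  have hlead : p.leadingCoeff * f ^ N = -∑ i ∈ Finset.range N, p.coeff i * f ^ i := by
    rw [eq_neg_iff_add_eq_zero, add_comm, ← hpf, Polynomial.eval_eq_sum_range,
      Finset.sum_range_succ]
    rfl
  have hlow : p.leadingCoeff * f ^ N ∈ 𝓕.Fprev (0 + N * m) := by
    rw [hlead, zero_add]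
    refine neg_mem (sum_mem fun i hi => 𝓕.F_le_Fprev (i := i * m) ?_ ?_)
    · exact Nat.mul_lt_mul_of_pos_right (Finset.mem_range.1 hi) hm
    · simpa using 𝓕.mul_mem 0 _ _ (hp i) _ (𝓕.pow_mem_F hf i)
  have hc : p.leadingCoeff ∉ 𝓕.Fprev 0 := by
    simpa [Fprev] using Polynomial.leadingCoeff_ne_zero.2 hp0
  exact 𝓕.mul_notMem_Fprev (hp N) hc (𝓕.pow_mem_F hf N) (𝓕.pow_notMem_Fprev hf hf' N) hlow

theorem F_zero_eq_top_of_integral [IsDomain 𝓕.gr]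
    (hint : ∀ f : A, ∃ (n : ℕ) (d : Fin (n + 1) → A),
      (∀ s, d s ∈ 𝓕.F 0) ∧ (∃ s, d s ≠ 0) ∧ ∑ s, d s * f ^ (s : ℕ) = 0) :
    𝓕.F 0 = ⊤ := by
  refine eq_top_iff.2 fun f _ => by_contra fun hf => ?_
  obtain ⟨n, d, hd, ⟨s, hs⟩, hsum⟩ := hint f
  obtain ⟨m, hfm, hfm'⟩ := 𝓕.exists_mem_F_notMem_Fprev fun h0 : f = 0 => hf (h0 ▸ zero_mem _)
  have hm : 0 < m := Nat.pos_of_ne_zero fun h0 => hf (h0 ▸ hfm)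
  set p : Polynomial A := ∑ t : Fin (n + 1), Polynomial.monomial (t : ℕ) (d t)
  have hcoeff : ∀ i, p.coeff i ∈ 𝓕.F 0 := fun i => by
    rw [Polynomial.coeff_sum_fin_monomial]
    split_ifs
    exacts [hd _, zero_mem _]
  have hp : p = 0 := 𝓕.eq_zero_of_eval_eq_zero hm hfm hfm' hcoeff
    (by simpa [p, Polynomial.eval_finsetSum] using hsum)
  apply hs
  calc d s = p.coeff s := by rw [Polynomial.coeff_sum_fin_monomial, dif_pos s.2]
    _ = 0 := by rw [hp, Polynomial.coeff_zero]

theorem uGood_le [IsDomain 𝓕.gr] : uGood k A ≤ 𝓕.F 0 :=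
  iInf₂_le 𝓕 ‹_›

end AlgFiltration

theorem statement15_general {k : Type v} [Field k]
    (A : Type u) [Ring A] [Algebra k A]
    (hint : ∀ f : A, ∃ (n : ℕ) (d : Fin (n + 1) → A),
      (∀ s, d s ∈ uGood k A) ∧ (∃ s, d s ≠ 0) ∧ ∑ s, d s * f ^ (s : ℕ) = 0) :
    uGood k A = ⊤ ∧ ∀ 𝓕 : AlgFiltration k A, IsDomain 𝓕.gr → 𝓕.F 0 = ⊤ := by
  have hgood : ∀ 𝓕 : AlgFiltration k A, IsDomain 𝓕.gr → 𝓕.F 0 = ⊤ := fun 𝓕 _ =>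
    𝓕.F_zero_eq_top_of_integral fun f =>
      let ⟨n, d, hd, hne, hsum⟩ := hint f
      ⟨n, d, fun s => 𝓕.uGood_le (hd s), hne, hsum⟩
  exact ⟨eq_top_iff.2 (le_iInf₂ fun 𝓕 h => (hgood 𝓕 h).ge), hgood⟩

/-- Proposition 1.3: a domain `A` which is left integral over `u_good(A)` satisfies
`u_good(A) = A`; equivalently, the only good ℕ-filtration of `A` is the trivial one. -/
theorem statement15 {k : Type v} [Field k]
    (A : Type u) [Ring A] [Algebra k A] [IsDomain A]
    (hint : ∀ f : A, ∃ (n : ℕ) (d : Fin (n + 1) → A),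
      (∀ s, d s ∈ uGood k A) ∧ (∃ s, d s ≠ 0) ∧ ∑ s, d s * f ^ (s : ℕ) = 0) :
    uGood k A = ⊤ ∧ ∀ 𝓕 : AlgFiltration k A, IsDomain 𝓕.gr → 𝓕.F 0 = ⊤ :=
  statement15_general A hint
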